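/- arXiv:2605.06500 — 4 statements merged into one kernel-verified Lean document; each statement's English description precedes it below -/
import Mathlib

section
/- Let E be a real inner product space (e.g. EuclideanSpace ℝ (Fin m)), let F : E → ℝ be differentiable with gradient ∇F that is L-Lipschitz for some L > 0, and suppose F(w) ≥ L_inf for all w ∈ E. On a probability space with a filtration (𝔽_t)_{t∈ℕ}, let (w_t) be an adapted sequence with w_0 deterministic, and let (g_t) be a sequence of square-integrable random vectors with g_t measurable with respect to 𝔽_{t+1}, satisfying almost surely: w_{t+1} = w_t − η g_t, E[g_t ∣ 𝔽_t] = ∇F(w_t), and E[‖g_t − ∇F(w_t)‖² ∣ 𝔽_t] ≤ σ², where 0 < η ≤ 1/L and σ ≥ 0. Then for every integer T ≥ 1: (1/T) Σ_{t=0}^{T−1} E[‖∇F(w_t)‖²] ≤ 2(F(w_0) − L_inf)/(η T) + η L σ². -/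
open MeasureTheory

/-!
By the descent lemma for the `L`-smooth `F`,
`F (w (t+1)) ≤ F (w t) - η ⟪∇F (w t), g t⟫ + η² L / 2 ‖g t‖²`.
Since `∇F (w t)` is `𝔽 t`-measurable it can be pulled out of `𝔼[· | 𝔽 t]`, so unbiasedness turns
the middle term into `-η 𝔼‖∇F (w t)‖²`, while the variance bound gives
`𝔼‖g t‖² ≤ σ² + 𝔼‖∇F (w t)‖²`. With `η L ≤ 1` each step thus lowers `𝔼 F` by
`η / 2 · 𝔼‖∇F (w t)‖²` up to `η² L σ² / 2`; summing over `t < T` and using `F ≥ Linf` gives the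
bound.
-/

section Smooth

variable {E : Type*} [NormedAddCommGroup E] [InnerProductSpace ℝ E] [CompleteSpace E]
  {F : E → ℝ} {F' : E → E} {L : ℝ}

theorem le_add_inner_add_sq_of_gradient_lipschitz
    (hgrad : ∀ x, HasGradientAt F (F' x) x) (hlip : ∀ x y, ‖F' x - F' y‖ ≤ L * ‖x - y‖)
    (x v : E) : F (x + v) ≤ F x + inner ℝ (F' x) v + L / 2 * ‖v‖ ^ 2 := by
  set φ : ℝ → ℝ := fun s => F (x + s • v) - s * inner ℝ (F' x) v - s ^ 2 * (L / 2 * ‖v‖ ^ 2)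
  have hφ : ∀ s : ℝ, HasDerivAt φ
      (inner ℝ (F' (x + s • v)) v - inner ℝ (F' x) v - 2 * s * (L / 2 * ‖v‖ ^ 2)) s := by
    intro s
    have hline : HasDerivAt (fun s : ℝ => x + s • v) v s := by
      simpa using ((hasDerivAt_id s).smul_const v).const_add x
    have hF := (hgrad (x + s • v)).hasFDerivAt.comp_hasDerivAt s hline
    simp only [InnerProductSpace.toDual_apply_apply] at hF
    refine ((hF.sub (hasDerivAt_mul_const _)).sub
      ((hasDerivAt_pow 2 s).mul_const _)).congr_deriv ?_
    norm_num
  have hderiv_nonpos : ∀ s ∈ interior (Set.Icc (0 : ℝ) 1),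
      inner ℝ (F' (x + s • v)) v - inner ℝ (F' x) v - 2 * s * (L / 2 * ‖v‖ ^ 2) ≤ 0 := by
    intro s hs
    rw [interior_Icc] at hs
    have : inner ℝ (F' (x + s • v) - F' x) v ≤ L * s * ‖v‖ ^ 2 :=
      calc inner ℝ (F' (x + s • v) - F' x) v ≤ ‖F' (x + s • v) - F' x‖ * ‖v‖ :=
            real_inner_le_norm _ _
        _ ≤ L * ‖(x + s • v) - x‖ * ‖v‖ := by gcongr; exact hlip _ _
        _ = L * s * ‖v‖ ^ 2 := by
            rw [add_sub_cancel_left, norm_smul, Real.norm_of_nonneg hs.1.le]; ring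
    rw [inner_sub_left] at this
    linarith
  have hanti : AntitoneOn φ (Set.Icc 0 1) :=
    antitoneOn_of_hasDerivWithinAt_nonpos (convex_Icc 0 1)
      (fun s _ => (hφ s).continuousAt.continuousWithinAt)
      (fun s _ => (hφ s).hasDerivWithinAt) hderiv_nonpos
  have := hanti (Set.left_mem_Icc.2 zero_le_one) (Set.right_mem_Icc.2 zero_le_one) zero_le_one
  norm_num [φ] at this
  linarith

theorem le_sub_inner_add_sq_of_gradient_lipschitz
    (hgrad : ∀ x, HasGradientAt F (F' x) x) (hlip : ∀ x y, ‖F' x - F' y‖ ≤ L * ‖x - y‖)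
    (x g : E) {η : ℝ} (hη : 0 ≤ η) :
    F (x - η • g) ≤ F x - η * inner ℝ (F' x) g + η ^ 2 * L / 2 * ‖g‖ ^ 2 := by
  rw [sub_eq_add_neg]
  refine (le_add_inner_add_sq_of_gradient_lipschitz hgrad hlip _ _).trans_eq ?_
  rw [inner_neg_right, real_inner_smul_right, norm_neg, norm_smul, Real.norm_of_nonneg hη]
  ring

end Smooth

theorem sum_range_le_of_le_sub_add {a d : ℕ → ℝ} {c : ℝ} (h : ∀ t, a (t + 1) ≤ a t - d t + c)
    (T : ℕ) : ∑ t ∈ Finset.range T, d t ≤ a 0 - a T + T * c := by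
  induction T with
  | zero => simp
  | succ T ih =>
    rw [Finset.sum_range_succ]
    push_cast
    linarith [h T]

section CondExp

variable {Ω : Type*} {m mΩ : MeasurableSpace Ω} {μ : Measure Ω}
  {E : Type*} [NormedAddCommGroup E] [InnerProductSpace ℝ E]

theorem MeasureTheory.MemLp.integrable_inner {f g : Ω → E} (hf : MemLp f 2 μ)
    (hg : MemLp g 2 μ) : Integrable (fun ω => inner ℝ (f ω) (g ω)) μ :=
  memLp_one_iff_integrable.1 ((innerSL ℝ).memLp_of_bilin 1 hf hg)

variable [CompleteSpace E]

theorem integral_inner_eq_integral_norm_sq_of_condExp_ae_eq [IsFiniteMeasure μ] (hm : m ≤ mΩ)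
    {g h : Ω → E} (hh : StronglyMeasurable[m] h)
    (hhg : Integrable (fun ω => inner ℝ (h ω) (g ω)) μ) (hg : Integrable g μ)
    (hcond : μ[g|m] =ᵐ[μ] h) :
    ∫ ω, inner ℝ (h ω) (g ω) ∂μ = ∫ ω, ‖h ω‖ ^ 2 ∂μ := by
  rw [← integral_condExp hm]
  refine integral_congr_ae ?_
  filter_upwards [condExp_bilin_of_stronglyMeasurable_left (innerSL ℝ) hh hhg hg, hcond]
    with ω hpull hω
  rw [innerSL_apply_apply, hω] at hpull
  exact hpull.trans (real_inner_self_eq_norm_sq _)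

theorem integral_norm_sq_le_of_condExp_ae_eq [IsProbabilityMeasure μ] (hm : m ≤ mΩ)
    {g h : Ω → E} {σ : ℝ} (hh : StronglyMeasurable[m] h) (hg : MemLp g 2 μ)
    (hcond : μ[g|m] =ᵐ[μ] h) (hvar : ∀ᵐ ω ∂μ, μ[fun ω' => ‖g ω' - h ω'‖ ^ 2|m] ω ≤ σ ^ 2) :
    ∫ ω, ‖g ω‖ ^ 2 ∂μ ≤ σ ^ 2 + ∫ ω, ‖h ω‖ ^ 2 ∂μ := by
  have hh2 : MemLp h 2 μ := (hg.condExp one_le_two).ae_eq hcond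
  have hinner := hh2.integrable_inner hg
  have hdev : Integrable (fun ω => ‖g ω - h ω‖ ^ 2) μ := (hg.sub hh2).norm.integrable_sq
  have hvar_int : ∫ ω, ‖g ω - h ω‖ ^ 2 ∂μ ≤ σ ^ 2 := by
    rw [← integral_condExp hm]
    calc ∫ ω, μ[fun ω' => ‖g ω' - h ω'‖ ^ 2|m] ω ∂μ ≤ ∫ _, σ ^ 2 ∂μ :=
          integral_mono_ae integrable_condExp (integrable_const _) hvar
      _ = σ ^ 2 := by simp
  have hexpand : ∀ ω, ‖g ω‖ ^ 2
      = ‖g ω - h ω‖ ^ 2 + 2 * inner ℝ (h ω) (g ω) - ‖h ω‖ ^ 2 := fun ω => by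
    rw [norm_sub_sq_real, real_inner_comm]; ring
  have hsum : Integrable (fun ω => ‖g ω - h ω‖ ^ 2 + 2 * inner ℝ (h ω) (g ω)) μ :=
    hdev.add (hinner.const_mul 2)
  simp_rw [hexpand]
  rw [integral_sub hsum hh2.norm.integrable_sq,
    integral_add hdev (hinner.const_mul 2), integral_const_mul,
    integral_inner_eq_integral_norm_sq_of_condExp_ae_eq hm hh hinner (hg.integrable one_le_two)
      hcond]
  linarith

end CondExp

section Step

variable {E : Type*} [NormedAddCommGroup E] [InnerProductSpace ℝ E] [CompleteSpace E]
  {Ω : Type*} {m mΩ : MeasurableSpace Ω} {μ : Measure Ω} [IsProbabilityMeasure μ]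
  {F : E → ℝ} {F' : E → E} {L Linf η σ : ℝ}

theorem integrable_and_integral_le_of_sgd_step (hgrad : ∀ x, HasGradientAt F (F' x) x)
    (hlip : ∀ x y, ‖F' x - F' y‖ ≤ L * ‖x - y‖) (hlb : ∀ x, Linf ≤ F x)
    (hL : 0 ≤ L) (hη : 0 ≤ η) (hηL : η * L ≤ 1) (hm : m ≤ mΩ) {x y g : Ω → E}
    (hx : StronglyMeasurable[m] x) (hg : MemLp g 2 μ) (hy : ∀ᵐ ω ∂μ, y ω = x ω - η • g ω)
    (hcond : μ[g|m] =ᵐ[μ] fun ω => F' (x ω))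
    (hvar : ∀ᵐ ω ∂μ, μ[fun ω' => ‖g ω' - F' (x ω')‖ ^ 2|m] ω ≤ σ ^ 2)
    (hFx : Integrable (fun ω => F (x ω)) μ) :
    Integrable (fun ω => F (y ω)) μ ∧
      ∫ ω, F (y ω) ∂μ ≤ ∫ ω, F (x ω) ∂μ - η / 2 * ∫ ω, ‖F' (x ω)‖ ^ 2 ∂μ
        + η ^ 2 * L * σ ^ 2 / 2 := by
  have hF : Continuous F := continuous_iff_continuousAt.2 fun x => (hgrad x).continuousAt
  have hF' : Continuous F' := (LipschitzWith.of_dist_le' (K := L) <| by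
    simpa only [dist_eq_norm] using hlip).continuous
  have hF'x : StronglyMeasurable[m] fun ω => F' (x ω) := hF'.comp_stronglyMeasurable hx
  have hF'x2 : MemLp (fun ω => F' (x ω)) 2 μ := (hg.condExp one_le_two).ae_eq hcond
  have hinner_int := hF'x2.integrable_inner hg
  have hinner : ∫ ω, inner ℝ (F' (x ω)) (g ω) ∂μ = ∫ ω, ‖F' (x ω)‖ ^ 2 ∂μ :=
    integral_inner_eq_integral_norm_sq_of_condExp_ae_eq hm hF'x hinner_int
      (hg.integrable one_le_two) hcond
  have hsecond : ∫ ω, ‖g ω‖ ^ 2 ∂μ ≤ σ ^ 2 + ∫ ω, ‖F' (x ω)‖ ^ 2 ∂μ :=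
    integral_norm_sq_le_of_condExp_ae_eq hm hF'x hg hcond hvar
  set B : Ω → ℝ := fun ω =>
    F (x ω) - η * inner ℝ (F' (x ω)) (g ω) + η ^ 2 * L / 2 * ‖g ω‖ ^ 2
  have hA : Integrable (fun ω => F (x ω) - η * inner ℝ (F' (x ω)) (g ω)) μ :=
    hFx.sub (hinner_int.const_mul η)
  have hB : Integrable B μ := hA.add (hg.norm.integrable_sq.const_mul _)
  have hyB : (fun ω => F (y ω)) ≤ᵐ[μ] B := by
    filter_upwards [hy] with ω hω
    rw [hω]
    exact le_sub_inner_add_sq_of_gradient_lipschitz hgrad hlip _ _ hη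
  have hFy_meas : AEStronglyMeasurable (fun ω => F (y ω)) μ :=
    hF.comp_aestronglyMeasurable <|
      ((hx.mono hm).aestronglyMeasurable.sub (hg.1.const_smul η)).congr
        (hy.mono fun ω hω => hω.symm)
  have hFy : Integrable (fun ω => F (y ω)) μ :=
    integrable_of_le_of_le hFy_meas (ae_of_all _ fun ω => hlb (y ω)) hyB
      (integrable_const Linf) hB
  refine ⟨hFy, (integral_mono_ae hFy hB hyB).trans ?_⟩
  have hB_eq : ∫ ω, B ω ∂μ = ∫ ω, F (x ω) ∂μ - η * ∫ ω, ‖F' (x ω)‖ ^ 2 ∂μ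
      + η ^ 2 * L / 2 * ∫ ω, ‖g ω‖ ^ 2 ∂μ := by
    rw [integral_add hA (hg.norm.integrable_sq.const_mul _),
      integral_sub hFx (hinner_int.const_mul η), integral_const_mul, integral_const_mul, hinner]
  have hgrad_sq : 0 ≤ ∫ ω, ‖F' (x ω)‖ ^ 2 ∂μ := integral_nonneg fun ω => sq_nonneg _
  rw [hB_eq]
  nlinarith [mul_le_mul_of_nonneg_left hsecond (by positivity : 0 ≤ η ^ 2 * L / 2),
    mul_le_mul_of_nonneg_left hηL (mul_nonneg hη hgrad_sq)]

end Step

theorem stmt_1_general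
    {E : Type*} [NormedAddCommGroup E] [InnerProductSpace ℝ E] [CompleteSpace E]
    {Ω : Type*} {mΩ : MeasurableSpace Ω} {μ : Measure Ω} [IsProbabilityMeasure μ]
    (𝔽 : Filtration ℕ mΩ)
    (F : E → ℝ) (F' : E → E) (L Linf η σ : ℝ)
    (hL : 0 < L)
    (hgrad : ∀ x, HasGradientAt F (F' x) x)
    (hlip : ∀ x y, ‖F' x - F' y‖ ≤ L * ‖x - y‖)
    (hlb : ∀ x, Linf ≤ F x)
    (w : ℕ → Ω → E) (g : ℕ → Ω → E) (w0 : E)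
    (hadapted : StronglyAdapted 𝔽 w)
    (hw0 : w 0 = fun _ => w0)
    (hgL2 : ∀ t, MemLp (g t) 2 μ)
    (hupdate : ∀ t, ∀ᵐ ω ∂μ, w (t + 1) ω = w t ω - η • g t ω)
    (hunbiased : ∀ t, μ[g t | 𝔽 t] =ᵐ[μ] fun ω => F' (w t ω))
    (hvar : ∀ t, ∀ᵐ ω ∂μ,
      (μ[fun ω' => ‖g t ω' - F' (w t ω')‖ ^ 2 | 𝔽 t]) ω ≤ σ ^ 2)
    (hη : 0 < η) (hηL : η ≤ 1 / L) :
    ∀ T : ℕ, 1 ≤ T →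
      (1 / (T : ℝ)) * ∑ t ∈ Finset.range T, ∫ ω, ‖F' (w t ω)‖ ^ 2 ∂μ
        ≤ 2 * (F w0 - Linf) / (η * T) + η * L * σ ^ 2 := by
  intro T hT
  have hηL' : η * L ≤ 1 := (le_div_iff₀ hL).1 hηL
  have step := fun t => integrable_and_integral_le_of_sgd_step hgrad hlip hlb hL.le hη.le hηL'
    (𝔽.le t) (hadapted t) (hgL2 t) (hupdate t) (hunbiased t) (hvar t)
  have hint : ∀ t, Integrable (fun ω => F (w t ω)) μ := by
    intro t
    induction t with
    | zero => simp only [hw0]; exact integrable_const _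
    | succ t ih => exact (step t ih).1
  have htelescope := sum_range_le_of_le_sub_add (a := fun t => ∫ ω, F (w t ω) ∂μ)
    (fun t => (step t (hint t)).2) T
  have hlow : Linf ≤ ∫ ω, F (w T ω) ∂μ := by
    simpa using integral_mono (integrable_const Linf) (hint T) fun ω => hlb (w T ω)
  have hT' : (0 : ℝ) < T := by exact_mod_cast hT
  simp only [← Finset.mul_sum, hw0, integral_const, probReal_univ, one_smul] at htelescope
  rw [div_add' _ _ _ (by positivity), one_div_mul_eq_div, div_le_div_iff₀ hT' (by positivity)]
  nlinarith

/-- Convergence of constant-stepsize SGD to approximate stationary points for an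
`L`-smooth, lower-bounded objective under unbiased stochastic gradients with
uniformly bounded conditional variance. -/
theorem stmt_1
    {E : Type*} [NormedAddCommGroup E] [InnerProductSpace ℝ E] [CompleteSpace E]
    {Ω : Type*} {mΩ : MeasurableSpace Ω} {μ : Measure Ω} [IsProbabilityMeasure μ]
    (𝔽 : Filtration ℕ mΩ)
    (F : E → ℝ) (F' : E → E) (L Linf η σ : ℝ)
    (hL : 0 < L)
    (hgrad : ∀ x, HasGradientAt F (F' x) x)
    (hlip : ∀ x y, ‖F' x - F' y‖ ≤ L * ‖x - y‖)
    (hlb : ∀ x, Linf ≤ F x)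
    (w : ℕ → Ω → E) (g : ℕ → Ω → E) (w0 : E)
    (hadapted : StronglyAdapted 𝔽 w)
    (hw0 : w 0 = fun _ => w0)
    (hgmeas : ∀ t, StronglyMeasurable[𝔽 (t + 1)] (g t))
    (hgL2 : ∀ t, MemLp (g t) 2 μ)
    (hupdate : ∀ t, ∀ᵐ ω ∂μ, w (t + 1) ω = w t ω - η • g t ω)
    (hunbiased : ∀ t, μ[g t | 𝔽 t] =ᵐ[μ] fun ω => F' (w t ω))
    (hvar : ∀ t, ∀ᵐ ω ∂μ,
      (μ[fun ω' => ‖g t ω' - F' (w t ω')‖ ^ 2 | 𝔽 t]) ω ≤ σ ^ 2)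
    (hη : 0 < η) (hηL : η ≤ 1 / L) (hσ : 0 ≤ σ) :
    ∀ T : ℕ, 1 ≤ T →
      (1 / (T : ℝ)) * ∑ t ∈ Finset.range T, ∫ ω, ‖F' (w t ω)‖ ^ 2 ∂μ
        ≤ 2 * (F w0 - Linf) / (η * T) + η * L * σ ^ 2 :=
  stmt_1_general 𝔽 F F' L Linf η σ hL hgrad hlip hlb w g w0 hadapted hw0 hgL2 hupdate hunbiased hvar
    hη hηL
end

section
/- Let E be a real normed space, K ⊆ E a subset, h > 0, γ > 0, κ ≥ 0, and p ≥ 1 an integer. Let φ : ℝ → E → E and Φ : E → E, and fix s ∈ E and N ≥ 1. Assume: (i) φ_0(s) = s and φ_{(n+1)h}(s) = φ_h(φ_{nh}(s)) for all 0 ≤ n < N (flow property along the grid); (ii) ‖Φ(x) − φ_h(x)‖ ≤ κ h^{p+1} for all x ∈ K (local defect of an order-p one-step method); (iii) ‖Φ(x) − Φ(y)‖ ≤ (1 + γh)‖x − y‖ for all x, y ∈ K (stability); (iv) the numerical iterates Φ^n(s) and the exact points φ_{nh}(s) lie in K for all 0 ≤ n < N. Then ‖Φ^N(s) − φ_{Nh}(s)‖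 ≤ (κ/γ)(e^{γNh} − 1) h^p. -/
/-- Global error bound for a one-step numerical integration map `Φ` approximating
the exact flow `φ` of an ODE: a local defect of order `h^(p+1)` together with
stability with Lipschitz factor `1 + γh` yields a global error of order `h^p`. -/
theorem stmt_4 {E : Type*} [NormedAddCommGroup E] (K : Set E)
    (h γ κ : ℝ) (p : ℕ) (hh : 0 < h) (hγ : 0 < γ) (hκ : 0 ≤ κ) (hp : 1 ≤ p)
    (φ : ℝ → E → E) (Φ : E → E) (s : E) (N : ℕ) (hN : 1 ≤ N)
    (hflow0 : φ 0 s = s)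
    (hflow : ∀ n : ℕ, n < N → φ (((n : ℝ) + 1) * h) s = φ h (φ ((n : ℝ) * h) s))
    (hdefect : ∀ x ∈ K, ‖Φ x - φ h x‖ ≤ κ * h ^ (p + 1))
    (hstab : ∀ x ∈ K, ∀ y ∈ K, ‖Φ x - Φ y‖ ≤ (1 + γ * h) * ‖x - y‖)
    (hK : ∀ n : ℕ, n < N → Φ^[n] s ∈ K ∧ φ ((n : ℝ) * h) s ∈ K) :
    ‖Φ^[N] s - φ ((N : ℝ) * h) s‖ ≤ (κ / γ) * (Real.exp (γ * N * h) - 1) * h ^ p := by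
  have key : ∀ n : ℕ, n ≤ N →
      ‖Φ^[n] s - φ ((n : ℝ) * h) s‖ ≤ (κ / γ) * ((1 + γ * h) ^ n - 1) * h ^ p := by
    intro n hn
    induction n with
    | zero =>
      simp [hflow0]
    | succ n ih =>
      have hnN : n < N := hn
      have ih' := ih (le_of_lt hnN)
      obtain ⟨hK1, hK2⟩ := hK n hnN
      have hstep : ‖Φ^[n+1] s - φ (((n : ℝ) + 1) * h) s‖ ≤
          (1 + γ * h) * ‖Φ^[n] s - φ ((n : ℝ) * h) s‖ + κ * h ^ (p + 1) := by
        rw [Function.iterate_succ_apply', hflow n hnN]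
        calc ‖Φ (Φ^[n] s) - φ h (φ ((n : ℝ) * h) s)‖
            ≤ ‖Φ (Φ^[n] s) - Φ (φ ((n : ℝ) * h) s)‖ +
              ‖Φ (φ ((n : ℝ) * h) s) - φ h (φ ((n : ℝ) * h) s)‖ := by
              have := norm_sub_le_norm_sub_add_norm_sub (Φ (Φ^[n] s))
                (Φ (φ ((n : ℝ) * h) s)) (φ h (φ ((n : ℝ) * h) s))
              exact this
          _ ≤ (1 + γ * h) * ‖Φ^[n] s - φ ((n : ℝ) * h) s‖ + κ * h ^ (p + 1) :=
              add_le_add (hstab _ hK1 _ hK2) (hdefect _ hK2)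
      have hpos : (0 : ℝ) ≤ 1 + γ * h := by positivity
      have h2 : (1 + γ * h) * ‖Φ^[n] s - φ ((n : ℝ) * h) s‖ + κ * h ^ (p + 1) ≤
          (1 + γ * h) * ((κ / γ) * ((1 + γ * h) ^ n - 1) * h ^ p) + κ * h ^ (p + 1) := by
        gcongr
      have h3 : (1 + γ * h) * ((κ / γ) * ((1 + γ * h) ^ n - 1) * h ^ p) + κ * h ^ (p + 1)
          = (κ / γ) * ((1 + γ * h) ^ (n + 1) - 1) * h ^ p := by
        have hγ' : γ ≠ 0 := ne_of_gt hγ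
        field_simp
        ring
      have : ((n : ℝ) + 1) * h = ((n + 1 : ℕ) : ℝ) * h := by push_cast; ring
      rw [← this]
      calc ‖Φ^[n+1] s - φ (((n : ℝ) + 1) * h) s‖ ≤ _ := hstep
        _ ≤ _ := h2
        _ = _ := h3
  have hfin := key N le_rfl
  refine hfin.trans ?_
  have hexp : (1 + γ * h) ^ N ≤ Real.exp (γ * N * h) := by
    have h1 : (1 + γ * h) ≤ Real.exp (γ * h) := by
      have := Real.add_one_le_exp (γ * h)
      linarith
    calc (1 + γ * h) ^ N ≤ (Real.exp (γ * h)) ^ N := by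
          apply pow_le_pow_left₀ (by positivity) h1
      _ = Real.exp (γ * N * h) := by
          rw [← Real.exp_nat_mul]; ring_nf
  have h0 : 0 ≤ κ / γ := by positivity
  have hp0 : 0 ≤ h ^ p := by positivity
  gcongr
end

section
/- Fix d ≥ 1, a nonempty action set A, and β > 0. On ℝ^d = EuclideanSpace ℝ (Fin d), let b : ℝ^d × A → ℝ^d, Q : ℝ^d × A → Matrix (Fin d) (Fin d) ℝ with each Q(s,a) symmetric and positive semidefinite, and r : ℝ^d × A → ℝ, and for twice continuously differentiable f define (L^a f)(s) = ⟪b(s,a), ∇f(s)⟫ + (1/2)·trace(Q(s,a) · Hess f(s)) and H[f](s) = ⨆_{a∈A} ( r(s,a) + (L^a f)(s) ), assumed finite where used. Let V : ℝ^d → ℝ be twice continuously differentiable with βV(s) = H[V](s) for all s, let g : ℝ^d → ℝ^d, let h : A → A be a bijection, and set W = V ∘ g, assumed twice continuously differentiable. Assume for all (s,a): |r(g(s), h(a)) − r(s,a)| ≤ ε_r and |(L^{h(a)} V)(g(s)) − (L^a W)(s)| ≤ ε_L, and assume both W − V and V − W attain their suprema at some points of ℝ^d. Then sup_{s} |V(g(s))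 − V(s)| ≤ (ε_r + ε_L)/β. -/
/-!
At a maximum point `s₀` of `W - V` the gradients of `W` and `V` agree and the Hessian of `W - V`
is negative semidefinite, so with a positive semidefinite diffusion matrix `L^a W (s₀) ≤ L^a V (s₀)`
for every action, whence `H[W](s₀) ≤ H[V](s₀)`. Reindexing the supremum defining `H[V](g s)` by the
bijection `h` shows that `W = V ∘ g` solves the HJB equation up to a residual of size `ε_r + ε_L`;
hence `β (W - V)(s₀) ≤ ε_r + ε_L`, which bounds `W - V` everywhere. The same argument at a
maximum point of `V - W` gives the other side.
-/

open RealInnerProductSpace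

/-- The Hessian matrix of second partial derivatives of `f` at `s`. -/
noncomputable def hessMat {d : ℕ} (f : EuclideanSpace ℝ (Fin d) → ℝ)
    (s : EuclideanSpace ℝ (Fin d)) : Matrix (Fin d) (Fin d) ℝ :=
  fun i j =>
    iteratedFDeriv ℝ 2 f s ![EuclideanSpace.single i 1, EuclideanSpace.single j 1]

/-- The controlled second-order generator
`(L^a f)(s) = ⟪b(s,a), ∇f(s)⟫ + (1/2)·trace(Q(s,a)·Hess f(s))`. -/
noncomputable def gen {d : ℕ} {A : Type*}
    (b : EuclideanSpace ℝ (Fin d) × A → EuclideanSpace ℝ (Fin d))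
    (Q : EuclideanSpace ℝ (Fin d) × A → Matrix (Fin d) (Fin d) ℝ)
    (a : A) (f : EuclideanSpace ℝ (Fin d) → ℝ) (s : EuclideanSpace ℝ (Fin d)) : ℝ :=
  ⟪b (s, a), gradient f s⟫ + (1 / 2) * (Q (s, a) * hessMat f s).trace

/-- The Hamiltonian `H[f](s) = ⨆_a ( r(s,a) + (L^a f)(s) )`. -/
noncomputable def ham {d : ℕ} {A : Type*}
    (b : EuclideanSpace ℝ (Fin d) × A → EuclideanSpace ℝ (Fin d))
    (Q : EuclideanSpace ℝ (Fin d) × A → Matrix (Fin d) (Fin d) ℝ)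
    (r : EuclideanSpace ℝ (Fin d) × A → ℝ)
    (f : EuclideanSpace ℝ (Fin d) → ℝ) (s : EuclideanSpace ℝ (Fin d)) : ℝ :=
  ⨆ a : A, (r (s, a) + gen b Q a f s)

open Set Matrix

open scoped MatrixOrder Matrix.Norms.L2Operator in
lemma Matrix.PosSemidef.trace_mul_nonneg {n : Type*} [Fintype n] {P M : Matrix n n ℝ}
    (hP : P.PosSemidef) (hM : M.PosSemidef) : 0 ≤ (P * M).trace := by
  classical
  obtain ⟨B, rfl⟩ := CStarAlgebra.nonneg_iff_eq_star_mul_self.mp hP.nonneg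
  rw [Matrix.star_eq_conjTranspose, Matrix.mul_assoc, Matrix.trace_mul_comm]
  exact (hM.mul_mul_conjTranspose_same B).trace_nonneg

lemma ContinuousLinearMap.apply_apply_eq_dotProduct_mulVec {ι : Type*} [Fintype ι]
    [DecidableEq ι] (B : EuclideanSpace ℝ ι →L[ℝ] EuclideanSpace ℝ ι →L[ℝ] ℝ)
    (v : EuclideanSpace ℝ ι) :
    B v v = v.ofLp ⬝ᵥ Matrix.of (fun i j ↦ B (EuclideanSpace.single i 1)
      (EuclideanSpace.single j 1)) *ᵥ v.ofLp := by
  conv_lhs => rw [← (EuclideanSpace.basisFun ι ℝ).toBasis.sum_repr v]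
  simp only [OrthonormalBasis.coe_toBasis_repr_apply, EuclideanSpace.basisFun_repr,
    OrthonormalBasis.coe_toBasis, EuclideanSpace.basisFun_apply, map_sum, map_smul,
    _root_.sum_apply, _root_.smul_apply, smul_eq_mul, Finset.mul_sum,
    dotProduct, mulVec, of_apply]
  rw [Finset.sum_comm]
  exact Finset.sum_congr rfl fun i _ ↦ Finset.sum_congr rfl fun j _ ↦ by ring

lemma hessMat_apply {d : ℕ} (f : EuclideanSpace ℝ (Fin d) → ℝ) (s : EuclideanSpace ℝ (Fin d))
    (i j : Fin d) :
    hessMat f s i j =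
      fderiv ℝ (fderiv ℝ f) s (EuclideanSpace.single i 1) (EuclideanSpace.single j 1) := by
  simp [hessMat, iteratedFDeriv_two_apply]

-- A positive second derivative would make `x₀` a local minimum as well, so `f` would be locally
-- constant near `x₀`.
lemma IsLocalMax.deriv_deriv_nonpos {f : ℝ → ℝ} {x₀ : ℝ} (h : IsLocalMax f x₀)
    (hc : ContinuousAt f x₀) : deriv (deriv f) x₀ ≤ 0 := by
  by_contra! hpos
  have hmin := isLocalMin_of_deriv_deriv_pos hpos h.deriv_eq_zero hc
  have hconst : f =ᶠ[nhds x₀] fun _ ↦ f x₀ := (h.and hmin).mono fun _ hx ↦ le_antisymm hx.1 hx.2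
  rw [hconst.deriv.deriv_eq] at hpos
  simp at hpos

lemma IsLocalMax.fderiv_fderiv_apply_self_nonpos {E : Type*} [NormedAddCommGroup E]
    [NormedSpace ℝ E] {f : E → ℝ} {x₀ : E} (h : IsLocalMax f x₀) (hf : Differentiable ℝ f)
    (hf' : DifferentiableAt ℝ (fderiv ℝ f) x₀) (v : E) : fderiv ℝ (fderiv ℝ f) x₀ v v ≤ 0 := by
  have hline : ∀ t : ℝ, HasDerivAt (fun t : ℝ ↦ x₀ + t • v) v t := fun t ↦ by
    simpa using ((hasDerivAt_id t).smul_const v).const_add x₀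
  have hderiv : deriv (fun t : ℝ ↦ f (x₀ + t • v)) = fun t : ℝ ↦ fderiv ℝ f (x₀ + t • v) v :=
    funext fun t ↦ ((hf _).hasFDerivAt.comp_hasDerivAt t (hline t)).deriv
  have hderiv2 : HasDerivAt (fun t : ℝ ↦ fderiv ℝ f (x₀ + t • v) v)
      (fderiv ℝ (fderiv ℝ f) x₀ v v) 0 := by
    have h0 : HasFDerivAt (fderiv ℝ f) (fderiv ℝ (fderiv ℝ f) x₀) (x₀ + (0 : ℝ) • v) := by
      simpa using hf'.hasFDerivAt
    exact (ContinuousLinearMap.apply ℝ ℝ v).hasFDerivAt.comp_hasDerivAt (0 : ℝ)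
      (h0.comp_hasDerivAt (0 : ℝ) (hline 0))
  have hmax : IsLocalMax (fun t : ℝ ↦ f (x₀ + t • v)) (0 : ℝ) :=
    IsLocalMax.comp_continuous (g := fun t : ℝ ↦ x₀ + t • v) (by simpa using h)
      (hline 0).continuousAt
  have := hmax.deriv_deriv_nonpos ((hf _).continuousAt.comp (hline 0).continuousAt)
  rwa [hderiv, hderiv2.deriv] at this

lemma IsLocalMax.posSemidef_neg_hessMat {d : ℕ} {f : EuclideanSpace ℝ (Fin d) → ℝ}
    {s₀ : EuclideanSpace ℝ (Fin d)} (h : IsLocalMax f s₀) (hf : ContDiff ℝ 2 f) :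
    (-hessMat f s₀).PosSemidef := by
  have hH : hessMat f s₀ = Matrix.of fun i j ↦
      fderiv ℝ (fderiv ℝ f) s₀ (EuclideanSpace.single i 1) (EuclideanSpace.single j 1) :=
    Matrix.ext (hessMat_apply f s₀)
  refine .of_dotProduct_mulVec_nonneg ?_ fun x ↦ ?_
  · have hsymm := hf.contDiffAt.isSymmSndFDerivAt (x := s₀) (by simp)
    ext i j
    simp [hH, hsymm (EuclideanSpace.single i 1)]
  · have := h.fderiv_fderiv_apply_self_nonpos (hf.differentiable (by norm_num))
      ((hf.fderiv_right (m := 1) (by norm_num)).differentiable (by norm_num) s₀)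
      (WithLp.toLp 2 x)
    rw [ContinuousLinearMap.apply_apply_eq_dotProduct_mulVec, ← hH] at this
    simpa [neg_mulVec] using this

section Generator

variable {d : ℕ} {A : Type*}
  (b : EuclideanSpace ℝ (Fin d) × A → EuclideanSpace ℝ (Fin d))
  (Q : EuclideanSpace ℝ (Fin d) × A → Matrix (Fin d) (Fin d) ℝ)

lemma gen_sub (a : A) {f₁ f₂ : EuclideanSpace ℝ (Fin d) → ℝ} (hf₁ : ContDiff ℝ 2 f₁)
    (hf₂ : ContDiff ℝ 2 f₂) (s : EuclideanSpace ℝ (Fin d)) :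
    gen b Q a (f₁ - f₂) s = gen b Q a f₁ s - gen b Q a f₂ s := by
  have hgrad : gradient (f₁ - f₂) s = gradient f₁ s - gradient f₂ s := by
    simp [gradient, fderiv_sub ((hf₁.differentiable (by norm_num)) s)
      ((hf₂.differentiable (by norm_num)) s)]
  have hhess : hessMat (f₁ - f₂) s = hessMat f₁ s - hessMat f₂ s := by
    ext i j
    simp [hessMat, iteratedFDeriv_sub_apply hf₁.contDiffAt hf₂.contDiffAt]
  simp only [gen, hgrad, hhess, inner_sub_right, Matrix.mul_sub, trace_sub]
  ring

lemma IsLocalMax.gen_nonpos {a : A} {f : EuclideanSpace ℝ (Fin d) → ℝ}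
    {s₀ : EuclideanSpace ℝ (Fin d)} (h : IsLocalMax f s₀) (hf : ContDiff ℝ 2 f)
    (hQ : (Q (s₀, a)).PosSemidef) : gen b Q a f s₀ ≤ 0 := by
  have hgrad : gradient f s₀ = 0 := by simp [gradient, h.fderiv_eq_zero]
  have htr := hQ.trace_mul_nonneg (h.posSemidef_neg_hessMat hf)
  rw [Matrix.mul_neg, trace_neg, neg_nonneg] at htr
  simp only [gen, hgrad, inner_zero_right, zero_add]
  linarith

end Generator

lemma abs_ciSup_sub_ciSup_le {ι : Type*} [Nonempty ι] {f g : ι → ℝ} {ε : ℝ}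
    (hf : BddAbove (range f)) (hg : BddAbove (range g)) (hfg : ∀ i, |f i - g i| ≤ ε) :
    |(⨆ i, f i) - ⨆ i, g i| ≤ ε := by
  rw [abs_sub_le_iff, sub_le_iff_le_add, sub_le_iff_le_add]
  constructor
  · exact ciSup_le fun i ↦ by linarith [(abs_le.mp (hfg i)).2, le_ciSup hg i]
  · exact ciSup_le fun i ↦ by linarith [(abs_le.mp (hfg i)).1, le_ciSup hf i]

section HJB

variable {d : ℕ} {A : Type*} {β : ℝ}
  {b : EuclideanSpace ℝ (Fin d) × A → EuclideanSpace ℝ (Fin d)}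
  {Q : EuclideanSpace ℝ (Fin d) × A → Matrix (Fin d) (Fin d) ℝ}
  {r : EuclideanSpace ℝ (Fin d) × A → ℝ}

variable (β b Q r) in
noncomputable def hjbResidual (f : EuclideanSpace ℝ (Fin d) → ℝ)
    (s : EuclideanSpace ℝ (Fin d)) : ℝ :=
  β * f s - ham b Q r f s

lemma ham_le_ham_of_isLocalMax_sub (hQ : ∀ s a, (Q (s, a)).PosSemidef)
    {f₁ f₂ : EuclideanSpace ℝ (Fin d) → ℝ} (hf₁ : ContDiff ℝ 2 f₁) (hf₂ : ContDiff ℝ 2 f₂)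
    {s₀ : EuclideanSpace ℝ (Fin d)}
    (hfin₂ : BddAbove (range fun a ↦ r (s₀, a) + gen b Q a f₂ s₀))
    (hmax : IsLocalMax (f₁ - f₂) s₀) : ham b Q r f₁ s₀ ≤ ham b Q r f₂ s₀ := by
  refine ciSup_mono hfin₂ fun a ↦ ?_
  have := hmax.gen_nonpos b Q (hf₁.sub hf₂) (hQ s₀ a)
  rw [gen_sub b Q a hf₁ hf₂] at this
  linarith

lemma sub_le_div_of_hjbResidual_sub_le (hβ : 0 < β) (hQ : ∀ s a, (Q (s, a)).PosSemidef)
    {f₁ f₂ : EuclideanSpace ℝ (Fin d) → ℝ} (hf₁ : ContDiff ℝ 2 f₁) (hf₂ : ContDiff ℝ 2 f₂)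
    {s₀ : EuclideanSpace ℝ (Fin d)}
    (hfin₂ : BddAbove (range fun a ↦ r (s₀, a) + gen b Q a f₂ s₀))
    (hmax : ∀ s, f₁ s - f₂ s ≤ f₁ s₀ - f₂ s₀) {ε : ℝ}
    (hres : hjbResidual β b Q r f₁ s₀ - hjbResidual β b Q r f₂ s₀ ≤ ε)
    (s : EuclideanSpace ℝ (Fin d)) : f₁ s - f₂ s ≤ ε / β := by
  have hham := ham_le_ham_of_isLocalMax_sub hQ hf₁ hf₂ hfin₂ (.of_forall hmax)
  have hβmax := mul_le_mul_of_nonneg_left (hmax s) hβ.le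
  rw [le_div_iff₀ hβ]
  unfold hjbResidual at hres
  linarith

theorem abs_sub_le_div_of_hjbResidual (hβ : 0 < β) (hQ : ∀ s a, (Q (s, a)).PosSemidef)
    {V W : EuclideanSpace ℝ (Fin d) → ℝ} (hV : ContDiff ℝ 2 V) (hW : ContDiff ℝ 2 W)
    (hfinV : ∀ s, BddAbove (range fun a ↦ r (s, a) + gen b Q a V s))
    (hfinW : ∀ s, BddAbove (range fun a ↦ r (s, a) + gen b Q a W s))
    (hVsol : ∀ s, hjbResidual β b Q r V s = 0) {ε : ℝ}
    (hWres : ∀ s, |hjbResidual β b Q r W s| ≤ ε)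
    (hattain₁ : ∃ s₀, ∀ s, W s - V s ≤ W s₀ - V s₀)
    (hattain₂ : ∃ s₀, ∀ s, V s - W s ≤ V s₀ - W s₀) (s : EuclideanSpace ℝ (Fin d)) :
    |W s - V s| ≤ ε / β := by
  obtain ⟨s₀, hs₀⟩ := hattain₁
  obtain ⟨s₁, hs₁⟩ := hattain₂
  refine abs_sub_le_iff.mpr ⟨?_, ?_⟩
  · refine sub_le_div_of_hjbResidual_sub_le hβ hQ hW hV (hfinV s₀) hs₀ ?_ s
    linarith [hVsol s₀, (abs_le.mp (hWres s₀)).2]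
  · refine sub_le_div_of_hjbResidual_sub_le hβ hQ hV hW (hfinW s₁) hs₁ ?_ s
    linarith [hVsol s₁, (abs_le.mp (hWres s₁)).1]

lemma abs_hjbResidual_comp_le [Nonempty A] {εr εL : ℝ} {V : EuclideanSpace ℝ (Fin d) → ℝ}
    {g : EuclideanSpace ℝ (Fin d) → EuclideanSpace ℝ (Fin d)} {h : A → A}
    (hh : Function.Surjective h)
    (hfinV : ∀ s, BddAbove (range fun a ↦ r (s, a) + gen b Q a V s))
    (hfinW : ∀ s, BddAbove (range fun a ↦ r (s, a) + gen b Q a (V ∘ g) s))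
    (hVsol : ∀ s, β * V s = ham b Q r V s)
    (hrclose : ∀ s a, |r (g s, h a) - r (s, a)| ≤ εr)
    (hgenclose : ∀ s a, |gen b Q (h a) V (g s) - gen b Q a (V ∘ g) s| ≤ εL)
    (s : EuclideanSpace ℝ (Fin d)) : |hjbResidual β b Q r (V ∘ g) s| ≤ εr + εL := by
  have hV_gs : β * V (g s) = ⨆ a, (r (g s, h a) + gen b Q (h a) V (g s)) := by
    rw [hVsol, ham, ← hh.iSup_comp]
  have hfin_gs : BddAbove (range fun a ↦ r (g s, h a) + gen b Q (h a) V (g s)) :=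
    (hfinV (g s)).mono (range_comp_subset_range h fun a ↦ r (g s, a) + gen b Q a V (g s))
  rw [hjbResidual, Function.comp_apply, hV_gs, ham]
  refine abs_ciSup_sub_ciSup_le hfin_gs (hfinW s) fun a ↦ abs_le.mpr ⟨?_, ?_⟩
  · linarith [abs_le.mp (hrclose s a), abs_le.mp (hgenclose s a)]
  · linarith [abs_le.mp (hrclose s a), abs_le.mp (hgenclose s a)]

end HJB

theorem stmt_11_general {d : ℕ} {A : Type*} [Nonempty A] (β : ℝ) (hβ : 0 < β)
    (b : EuclideanSpace ℝ (Fin d) × A → EuclideanSpace ℝ (Fin d))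
    (Q : EuclideanSpace ℝ (Fin d) × A → Matrix (Fin d) (Fin d) ℝ)
    (hQ : ∀ s a, (Q (s, a)).PosSemidef)
    (r : EuclideanSpace ℝ (Fin d) × A → ℝ)
    (εr εL : ℝ)
    (V : EuclideanSpace ℝ (Fin d) → ℝ) (hV : ContDiff ℝ 2 V)
    (g : EuclideanSpace ℝ (Fin d) → EuclideanSpace ℝ (Fin d))
    (h : A → A) (hbij : Function.Bijective h)
    (hW : ContDiff ℝ 2 (V ∘ g))
    (hfinV : ∀ s, BddAbove (Set.range fun a : A => r (s, a) + gen b Q a V s))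
    (hfinW : ∀ s, BddAbove (Set.range fun a : A => r (s, a) + gen b Q a (V ∘ g) s))
    (hVsol : ∀ s, β * V s = ham b Q r V s)
    (hrclose : ∀ s a, |r (g s, h a) - r (s, a)| ≤ εr)
    (hgenclose : ∀ s a, |gen b Q (h a) V (g s) - gen b Q a (V ∘ g) s| ≤ εL)
    (hattain₁ : ∃ s₀, ∀ s, (V ∘ g) s - V s ≤ (V ∘ g) s₀ - V s₀)
    (hattain₂ : ∃ s₀, ∀ s, V s - (V ∘ g) s ≤ V s₀ - (V ∘ g) s₀) :
    ∀ s, |V (g s) - V s| ≤ (εr + εL) / β :=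
  abs_sub_le_div_of_hjbResidual hβ hQ hV hW hfinV hfinW
    (fun s ↦ sub_eq_zero.mpr (hVsol s))
    (abs_hjbResidual_comp_le hbij.surjective hfinV hfinW hVsol hrclose hgenclose)
    hattain₁ hattain₂

/-- Approximate value-preserving structure implies approximate value invariance
(classical-regularity version): the pullback of the HJB solution `V` along the
transformation deviates from `V` by at most `(ε_r + ε_L)/β` in supremum norm. -/
theorem stmt_11 {d : ℕ} (hd : 1 ≤ d) {A : Type*} [Nonempty A] (β : ℝ) (hβ : 0 < β)
    (b : EuclideanSpace ℝ (Fin d) × A → EuclideanSpace ℝ (Fin d))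
    (Q : EuclideanSpace ℝ (Fin d) × A → Matrix (Fin d) (Fin d) ℝ)
    (hQ : ∀ s a, (Q (s, a)).PosSemidef)
    (r : EuclideanSpace ℝ (Fin d) × A → ℝ)
    (εr εL : ℝ)
    (V : EuclideanSpace ℝ (Fin d) → ℝ) (hV : ContDiff ℝ 2 V)
    (g : EuclideanSpace ℝ (Fin d) → EuclideanSpace ℝ (Fin d))
    (h : A → A) (hbij : Function.Bijective h)
    (hW : ContDiff ℝ 2 (V ∘ g))
    (hfinV : ∀ s, BddAbove (Set.range fun a : A => r (s, a) + gen b Q a V s))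
    (hfinW : ∀ s, BddAbove (Set.range fun a : A => r (s, a) + gen b Q a (V ∘ g) s))
    (hVsol : ∀ s, β * V s = ham b Q r V s)
    (hrclose : ∀ s a, |r (g s, h a) - r (s, a)| ≤ εr)
    (hgenclose : ∀ s a, |gen b Q (h a) V (g s) - gen b Q a (V ∘ g) s| ≤ εL)
    (hattain₁ : ∃ s₀, ∀ s, (V ∘ g) s - V s ≤ (V ∘ g) s₀ - V s₀)
    (hattain₂ : ∃ s₀, ∀ s, V s - (V ∘ g) s ≤ V s₀ - (V ∘ g) s₀) :
    ∀ s, |V (g s) - V s| ≤ (εr + εL) / β :=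
  stmt_11_general β hβ b Q hQ r εr εL V hV g h hbij hW hfinV hfinW hVsol hrclose hgenclose hattain₁
    hattain₂
end

section
/- Fix d ≥ 1 and x₀ ∈ ℝ^d = EuclideanSpace ℝ (Fin d). Let u ∈ ℝ^d and let M be a symmetric real d×d matrix. If for every twice continuously differentiable f : ℝ^d → ℝ one has ⟪u, ∇f(x₀)⟫ + (1/2)·trace(M · Hess f(x₀)) = 0, where ∇f(x₀) is the gradient and Hess f(x₀) the Hessian matrix of f at x₀, then u = 0 and M = 0. -/
/-!
The coordinate functions `x ↦ x k` have vanishing Hessian and gradient `e_k`, so testing against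
them gives `u k = 0`. Once `u = 0`, testing against `x ↦ x i * x j`, whose Hessian is
`E_ij + E_ji`, gives `M j i + M i j = 0`, and symmetry of `M` forces `M i j = 0`.
-/

open RealInnerProductSpace

section

variable {d : ℕ}

lemma inner_gradient_continuousLinearMap (L : EuclideanSpace ℝ (Fin d) →L[ℝ] ℝ)
    (u x : EuclideanSpace ℝ (Fin d)) : ⟪u, gradient L x⟫ = L u := by
  rw [real_inner_comm, gradient, L.fderiv, InnerProductSpace.toDual_symm_apply]

lemma hessMat_continuousLinearMap (L : EuclideanSpace ℝ (Fin d) →L[ℝ] ℝ)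
    (x : EuclideanSpace ℝ (Fin d)) : hessMat L x = 0 := by
  have hderiv : fderiv ℝ L = fun _ => L := funext fun _ => L.fderiv
  ext i j
  simp [hessMat, iteratedFDeriv_two_apply, hderiv]

lemma hessMat_mul_continuousLinearMap (L₁ L₂ : EuclideanSpace ℝ (Fin d) →L[ℝ] ℝ)
    (x : EuclideanSpace ℝ (Fin d)) :
    hessMat (fun y => L₁ y * L₂ y) x =
      Matrix.vecMulVec (fun i => L₁ (EuclideanSpace.single i 1))
          (fun j => L₂ (EuclideanSpace.single j 1)) +
        Matrix.vecMulVec (fun i => L₂ (EuclideanSpace.single i 1))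
          (fun j => L₁ (EuclideanSpace.single j 1)) := by
  set B := L₁.smulRight L₂ + L₂.smulRight L₁
  have hderiv : fderiv ℝ (fun y => L₁ y * L₂ y) = B := by
    funext y
    refine (L₁.hasFDerivAt.mul L₂.hasFDerivAt).fderiv.trans ?_
    ext v
    simp [B, mul_comm]
  ext i j
  rw [hessMat, iteratedFDeriv_two_apply, hderiv, B.fderiv]
  simp [B, Matrix.vecMulVec_apply]

lemma hessMat_proj_mul_proj (i j : Fin d) (x : EuclideanSpace ℝ (Fin d)) :
    hessMat (fun y => EuclideanSpace.proj i y * EuclideanSpace.proj j y) x =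
      Matrix.single i j 1 + Matrix.single j i 1 := by
  rw [hessMat_mul_continuousLinearMap, Matrix.single_eq_single_vecMulVec_single,
    Matrix.single_eq_single_vecMulVec_single]
  congr <;> funext k <;> simp [Pi.single_apply, eq_comm]

lemma Matrix.trace_mul_single_add_single {n R : Type*} [Fintype n] [DecidableEq n] [Semiring R]
    (M : Matrix n n R) (i j : n) :
    (M * (Matrix.single i j 1 + Matrix.single j i 1)).trace = M j i + M i j := by
  simp [Matrix.mul_add, Matrix.trace_add, Matrix.trace_mul_single]

end

theorem stmt_15_general {d : ℕ} (x₀ u : EuclideanSpace ℝ (Fin d))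
    (M : Matrix (Fin d) (Fin d) ℝ) (hM : M.IsSymm)
    (hzero : ∀ f : EuclideanSpace ℝ (Fin d) → ℝ, ContDiff ℝ 2 f →
      ⟪u, gradient f x₀⟫ + (1 / 2) * (M * hessMat f x₀).trace = 0) :
    u = 0 ∧ M = 0 := by
  have hu : u = 0 := by
    ext k
    have h := hzero _ (EuclideanSpace.proj k : EuclideanSpace ℝ (Fin d) →L[ℝ] ℝ).contDiff
    rwa [inner_gradient_continuousLinearMap, hessMat_continuousLinearMap, Matrix.mul_zero,
      Matrix.trace_zero, mul_zero, add_zero] at h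
  refine ⟨hu, ?_⟩
  ext i j
  have h := hzero _ ((EuclideanSpace.proj i).contDiff.mul (EuclideanSpace.proj j).contDiff)
  rw [hu, inner_zero_left, hessMat_proj_mul_proj, Matrix.trace_mul_single_add_single,
    hM.apply] at h
  simp only [Matrix.zero_apply]
  linarith

/-- Separation lemma: if `⟪u, ∇f(x₀)⟫ + (1/2)·trace(M · Hess f(x₀)) = 0` for every
`C²` test function `f`, with `M` symmetric, then `u = 0` and `M = 0`. -/
theorem stmt_15 {d : ℕ} (hd : 1 ≤ d) (x₀ u : EuclideanSpace ℝ (Fin d))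
    (M : Matrix (Fin d) (Fin d) ℝ) (hM : M.IsSymm)
    (hzero : ∀ f : EuclideanSpace ℝ (Fin d) → ℝ, ContDiff ℝ 2 f →
      ⟪u, gradient f x₀⟫ + (1 / 2) * (M * hessMat f x₀).trace = 0) :
    u = 0 ∧ M = 0 :=
  stmt_15_general x₀ u M hM hzero
end
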